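/- arXiv:1612.01646 — 6 statements merged into one kernel-verified Lean document; each statement's English description precedes it below -/
import Mathlib

section
/- J*(b) is a convex function of the storage-capacity vector b on ℝ^m_+, and it is non-increasing: if b ≤ b' componentwise then J*(b') ≤ J*(b). (Convexity/monotonicity part of Theorem 1.) -/
open MeasureTheory

noncomputable section

/-- Total dispatch cost `g(v) = ∑ i, (αᵢ·max(vᵢ,0) − βᵢ·max(−vᵢ,0))`. -/
def dispatchCost {m : ℕ} (α β : Fin m → ℝ) (v : Fin m → ℝ) : ℝ :=
  ∑ i, (α i * max (v i) 0 - β i * max (-v i) 0)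

/-- Storage state generated by the increments `u`: `z 0 = 0`, `z (k+1) = z k + u k`. -/
def storState {m : ℕ} (u : ℕ → Fin m → ℝ) : ℕ → Fin m → ℝ
  | 0 => 0
  | k + 1 => storState u k + u k

/-- A causal control policy: at each time `k` it maps the observed history of net demands
`ξ_0, …, ξ_k` (taking values in the finite set `Ξ`) to a storage control `u k` and a
dispatch `v k`.  Causality is expressed by letting the controls depend on the whole path
while requiring that they only depend on its first `k+1` coordinates. -/
structure Policy (m : ℕ) (Ξ : Finset (Fin m → ℝ)) where
  u : ℕ → (ℕ → {x // x ∈ Ξ}) → Fin m → ℝ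
  v : ℕ → (ℕ → {x // x ∈ Ξ}) → Fin m → ℝ
  causal_u : ∀ k ω ω', (∀ j ≤ k, ω j = ω' j) → u k ω = u k ω'
  causal_v : ∀ k ω ω', (∀ j ≤ k, ω j = ω' j) → v k ω = v k ω'

/-- The storage state trajectory induced by a policy along a net-demand path. -/
def Policy.z {m : ℕ} {Ξ : Finset (Fin m → ℝ)} (π : Policy m Ξ)
    (ω : ℕ → {x // x ∈ Ξ}) : ℕ → Fin m → ℝ :=
  storState fun k => π.u k ω

/-- Admissibility of a policy for horizon `N`, injection polytope `P` and storage
capacity vector `b`: along every net-demand path, `0 ≤ z k + u k ≤ b` componentwise and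
`v k − u k − ξ k ∈ P` for all `k < N`. -/
def Policy.Admissible {m : ℕ} {Ξ : Finset (Fin m → ℝ)} (π : Policy m Ξ)
    (N : ℕ) (P : Set (Fin m → ℝ)) (b : Fin m → ℝ) : Prop :=
  ∀ ω : ℕ → {x // x ∈ Ξ}, ∀ k, k < N →
    (∀ i, 0 ≤ π.z ω k i + π.u k ω i ∧ π.z ω k i + π.u k ω i ≤ b i) ∧
    (π.v k ω - π.u k ω - (ω k : Fin m → ℝ)) ∈ P

/-- Expected cost of dispatch of a policy over `N` periods. -/
def Policy.cost {m : ℕ} {Ξ : Finset (Fin m → ℝ)} (π : Policy m Ξ)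
    (N : ℕ) (α β : Fin m → ℝ) (μ : Measure (ℕ → {x // x ∈ Ξ})) : ℝ :=
  ∫ ω, ∑ k ∈ Finset.range N, dispatchCost α β (π.v k ω) ∂μ

/-- Optimal cost `J*(b)`: infimum of expected dispatch cost over admissible policies. -/
def Jstar {m : ℕ} (Ξ : Finset (Fin m → ℝ)) (N : ℕ) (α β : Fin m → ℝ)
    (P : Set (Fin m → ℝ)) (μ : Measure (ℕ → {x // x ∈ Ξ})) (b : Fin m → ℝ) : ℝ :=
  sInf { c : ℝ | ∃ π : Policy m Ξ, π.Admissible N P b ∧ π.cost N α β μ = c }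


/-!
Admissibility is preserved under convex combinations of policies: mixing the controls of a
policy admissible for `b` with those of one admissible for `b'` gives one admissible for the
mixed capacity, because the storage state is linear in the controls and `P` is convex. Since
`g = ∑ i, ((αᵢ - βᵢ) · max(vᵢ, 0) + βᵢ · vᵢ)` is convex, the mixed policy costs at most the mix
of the two costs, and taking infima gives convexity of `J*`. Enlarging `b` only enlarges the set
of admissible policies. Both infima are genuine: the policy that never stores is admissible,
and admissible dispatches are bounded below, so by monotonicity of `g` their costs are too.
-/

open Set

theorem Real.sInf_le_mul_sInf_add_mul_sInf {A B C : Set ℝ} (hA : A.Nonempty) (hA' : BddBelow A)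
    (hB : B.Nonempty) (hB' : BddBelow B) (hC : BddBelow C) {s t : ℝ} (hs : 0 ≤ s) (ht : 0 ≤ t)
    (h : ∀ a ∈ A, ∀ b ∈ B, ∃ c ∈ C, c ≤ s * a + t * b) :
    sInf C ≤ s * sInf A + t * sInf B := by
  rw [← smul_eq_mul, ← smul_eq_mul, ← Real.sInf_smul_of_nonneg hs,
    ← Real.sInf_smul_of_nonneg ht, ← csInf_add (hA.smul_set) (hA'.smul_of_nonneg hs)
    (hB.smul_set) (hB'.smul_of_nonneg ht)]
  refine le_csInf ((hA.smul_set).add (hB.smul_set)) ?_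
  rintro _ ⟨_, ⟨a, ha, rfl⟩, _, ⟨b, hb, rfl⟩, rfl⟩
  obtain ⟨c, hc, hle⟩ := h a ha b hb
  exact (csInf_le hC hc).trans hle

theorem DependsOn.integrable_of_finite {ι α E : Type*} [MeasurableSpace α] [Finite α]
    [MeasurableSingletonClass α] [NormedAddCommGroup E] {μ : Measure (ι → α)} [IsFiniteMeasure μ]
    {f : (ι → α) → E} {s : Set ι} (hs : s.Finite) (hf : DependsOn f s) : Integrable f μ := by
  obtain ⟨g, rfl⟩ := dependsOn_iff_exists_comp.1 hf
  have : Finite s := hs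
  exact Integrable.of_finite.comp_measurable (Set.measurable_restrict s)

section DispatchCost

variable {m : ℕ} {α β : Fin m → ℝ}

theorem dispatchCost_eq (α β v : Fin m → ℝ) :
    dispatchCost α β v = ∑ i, ((α i - β i) * max (v i) 0 + β i * v i) := by
  refine Finset.sum_congr rfl fun i _ => ?_
  linear_combination β i * max_zero_sub_max_neg_zero_eq_self (v i)

theorem dispatchCost_convexOn (hαβ : ∀ i, β i ≤ α i) : ConvexOn ℝ univ (dispatchCost α β) := by
  refine ⟨convex_univ, fun v _ w _ s t hs ht hst => ?_⟩
  simp only [dispatchCost_eq, smul_eq_mul, Finset.mul_sum, ← Finset.sum_add_distrib]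
  refine Finset.sum_le_sum fun i _ => ?_
  have hmax : max (s * v i + t * w i) 0 ≤ s * max (v i) 0 + t * max (w i) 0 :=
    max_le (add_le_add (mul_le_mul_of_nonneg_left (le_max_left _ _) hs)
        (mul_le_mul_of_nonneg_left (le_max_left _ _) ht))
      (add_nonneg (mul_nonneg hs (le_max_right _ _)) (mul_nonneg ht (le_max_right _ _)))
  simp only [Pi.add_apply, Pi.smul_apply, smul_eq_mul]
  linarith [mul_le_mul_of_nonneg_left hmax (sub_nonneg.2 (hαβ i))]

theorem dispatchCost_monotone (hβ : ∀ i, 0 ≤ β i) (hαβ : ∀ i, β i ≤ α i) :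
    Monotone (dispatchCost α β) := by
  intro v w hvw
  simp only [dispatchCost_eq]
  gcongr with i
  · exact sub_nonneg.2 (hαβ i)
  · exact hvw i
  · exact hβ i
  · exact hvw i

end DispatchCost

namespace Policy

variable {m : ℕ} {Ξ : Finset (Fin m → ℝ)} {N : ℕ} {P : Set (Fin m → ℝ)} {b b' : Fin m → ℝ}

theorem z_succ (π : Policy m Ξ) (ω : ℕ → {x // x ∈ Ξ}) (k : ℕ) :
    π.z ω (k + 1) = π.z ω k + π.u k ω := rfl

theorem admissible_iff {π : Policy m Ξ} :
    π.Admissible N P b ↔ ∀ ω k, k < N →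
      (0 ≤ π.z ω (k + 1) ∧ π.z ω (k + 1) ≤ b) ∧ π.v k ω - π.u k ω - ω k ∈ P := by
  simp only [Admissible, Pi.le_def, ← forall_and, z_succ, Pi.add_apply, Pi.zero_apply]

theorem Admissible.z_nonneg {π : Policy m Ξ} (hπ : π.Admissible N P b)
    (ω : ℕ → {x // x ∈ Ξ}) {k : ℕ} (hk : k < N) : 0 ≤ π.z ω (k + 1) :=
  (admissible_iff.1 hπ ω k hk).1.1

theorem Admissible.z_le {π : Policy m Ξ} (hπ : π.Admissible N P b) (hb : 0 ≤ b)
    (ω : ℕ → {x // x ∈ Ξ}) : ∀ {k : ℕ}, k ≤ N → π.z ω k ≤ b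
  | 0, _ => hb
  | k + 1, hk => (admissible_iff.1 hπ ω k hk).1.2

theorem Admissible.mono {π : Policy m Ξ} (hπ : π.Admissible N P b) (hbb' : b ≤ b') :
    π.Admissible N P b' :=
  admissible_iff.2 fun ω k hk =>
    let ⟨⟨hz₀, hz⟩, hp⟩ := admissible_iff.1 hπ ω k hk
    ⟨⟨hz₀, hz.trans hbb'⟩, hp⟩

theorem Admissible.le_v {π : Policy m Ξ} (hπ : π.Admissible N P b) (hb : 0 ≤ b)
    {p₀ x₀ : Fin m → ℝ} (hp₀ : p₀ ∈ lowerBounds P) (hx₀ : x₀ ∈ lowerBounds (Ξ : Set _))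
    (ω : ℕ → {x // x ∈ Ξ}) {k : ℕ} (hk : k < N) : p₀ - b + x₀ ≤ π.v k ω := by
  have hu : -b ≤ π.u k ω := by
    simpa [z_succ] using sub_le_sub (hπ.z_nonneg ω hk) (hπ.z_le hb ω hk.le)
  have hv : π.v k ω = (π.v k ω - π.u k ω - ω k) + π.u k ω + ω k := by abel
  rw [hv, sub_eq_add_neg p₀]
  gcongr
  exacts [hp₀ (hπ ω k hk).2, hx₀ (ω k).2]

def noStorage (m : ℕ) (Ξ : Finset (Fin m → ℝ)) : Policy m Ξ where
  u _ _ := 0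
  v k ω := ω k
  causal_u _ _ _ _ := rfl
  causal_v k _ _ h := by rw [h k le_rfl]

theorem z_noStorage (ω : ℕ → {x // x ∈ Ξ}) : ∀ k, (noStorage m Ξ).z ω k = 0
  | 0 => rfl
  | k + 1 => by rw [z_succ, z_noStorage ω k]; exact zero_add _

theorem admissible_noStorage (hb : 0 ≤ b) (hP₀ : 0 ∈ P) : (noStorage m Ξ).Admissible N P b := by
  refine admissible_iff.2 fun ω k _ => ?_
  rw [z_noStorage]
  exact ⟨⟨le_rfl, hb⟩, by simpa [noStorage] using hP₀⟩

def convexComb (t : ℝ) (π π' : Policy m Ξ) : Policy m Ξ where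
  u k ω := t • π.u k ω + (1 - t) • π'.u k ω
  v k ω := t • π.v k ω + (1 - t) • π'.v k ω
  causal_u k ω ω' h := by simp only [π.causal_u k ω ω' h, π'.causal_u k ω ω' h]
  causal_v k ω ω' h := by simp only [π.causal_v k ω ω' h, π'.causal_v k ω ω' h]

theorem z_convexComb (t : ℝ) (π π' : Policy m Ξ) (ω : ℕ → {x // x ∈ Ξ}) :
    ∀ k, (convexComb t π π').z ω k = t • π.z ω k + (1 - t) • π'.z ω k
  | 0 => by simp [Policy.z, storState]
  | k + 1 => by
    rw [z_succ, z_convexComb t π π' ω k, z_succ, z_succ]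
    dsimp only [convexComb]
    module

theorem Admissible.convexComb {π π' : Policy m Ξ} (hπ : π.Admissible N P b)
    (hπ' : π'.Admissible N P b') (hP : Convex ℝ P) {t : ℝ} (ht₀ : 0 ≤ t) (ht₁ : t ≤ 1) :
    (π.convexComb t π').Admissible N P (t • b + (1 - t) • b') := by
  refine admissible_iff.2 fun ω k hk => ?_
  obtain ⟨⟨hz₀, hz⟩, hp⟩ := admissible_iff.1 hπ ω k hk
  obtain ⟨⟨hz₀', hz'⟩, hp'⟩ := admissible_iff.1 hπ' ω k hk
  have ht₁' : 0 ≤ 1 - t := sub_nonneg.2 ht₁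
  refine ⟨?_, ?_⟩
  · rw [z_convexComb]
    constructor
    · exact add_nonneg (smul_nonneg ht₀ hz₀) (smul_nonneg ht₁' hz₀')
    · exact add_le_add (smul_le_smul_of_nonneg_left hz ht₀) (smul_le_smul_of_nonneg_left hz' ht₁')
  · convert hP hp hp' ht₀ ht₁' (by ring) using 1
    simp only [Policy.convexComb]
    module

variable {α β : Fin m → ℝ} {μ : Measure (ℕ → {x // x ∈ Ξ})}

theorem integrable_sum_dispatchCost (π : Policy m Ξ) (N : ℕ) (α β : Fin m → ℝ)
    (μ : Measure (ℕ → {x // x ∈ Ξ})) [IsFiniteMeasure μ] :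
    Integrable (fun ω => ∑ k ∈ Finset.range N, dispatchCost α β (π.v k ω)) μ := by
  refine DependsOn.integrable_of_finite (Set.finite_Iio N) fun ω ω' h => ?_
  refine Finset.sum_congr rfl fun k hk => congrArg _ (π.causal_v k ω ω' fun j hj => h j ?_)
  exact lt_of_le_of_lt hj (Finset.mem_range.1 hk)

theorem cost_convexComb_le [IsFiniteMeasure μ] (hαβ : ∀ i, β i ≤ α i) (π π' : Policy m Ξ)
    {t : ℝ} (ht₀ : 0 ≤ t) (ht₁ : t ≤ 1) :
    (π.convexComb t π').cost N α β μ ≤ t * π.cost N α β μ + (1 - t) * π'.cost N α β μ := by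
  have hint := π.integrable_sum_dispatchCost N α β μ
  have hint' := π'.integrable_sum_dispatchCost N α β μ
  rw [cost, cost, cost, ← integral_const_mul, ← integral_const_mul,
    ← integral_add (hint.const_mul t) (hint'.const_mul (1 - t))]
  refine integral_mono (integrable_sum_dispatchCost _ N α β μ)
    ((hint.const_mul t).add (hint'.const_mul (1 - t))) fun ω => ?_
  simp only [Finset.mul_sum, ← Finset.sum_add_distrib]
  exact Finset.sum_le_sum fun k _ =>
    (dispatchCost_convexOn hαβ).2 trivial trivial ht₀ (sub_nonneg.2 ht₁) (by ring)

theorem Admissible.le_cost [IsProbabilityMeasure μ] (hβ : ∀ i, 0 ≤ β i)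
    (hαβ : ∀ i, β i ≤ α i) {π : Policy m Ξ} (hπ : π.Admissible N P b) (hb : 0 ≤ b)
    {p₀ x₀ : Fin m → ℝ} (hp₀ : p₀ ∈ lowerBounds P) (hx₀ : x₀ ∈ lowerBounds (Ξ : Set _)) :
    N * dispatchCost α β (p₀ - b + x₀) ≤ π.cost N α β μ := by
  have hle : (fun _ => N * dispatchCost α β (p₀ - b + x₀))
      ≤ fun ω => ∑ k ∈ Finset.range N, dispatchCost α β (π.v k ω) := fun ω => by
    simpa using Finset.sum_le_sum fun k hk =>
      dispatchCost_monotone hβ hαβ (hπ.le_v hb hp₀ hx₀ ω (Finset.mem_range.1 hk))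
  simpa [cost] using integral_mono (integrable_const _) (π.integrable_sum_dispatchCost N α β μ) hle

end Policy

section OptimalCost

variable {m : ℕ} {Ξ : Finset (Fin m → ℝ)} {N : ℕ} {P : Set (Fin m → ℝ)} {α β : Fin m → ℝ}
  {μ : Measure (ℕ → {x // x ∈ Ξ})} {b : Fin m → ℝ}

def admissibleCosts (Ξ : Finset (Fin m → ℝ)) (N : ℕ) (α β : Fin m → ℝ) (P : Set (Fin m → ℝ))
    (μ : Measure (ℕ → {x // x ∈ Ξ})) (b : Fin m → ℝ) : Set ℝ :=
  { c : ℝ | ∃ π : Policy m Ξ, π.Admissible N P b ∧ π.cost N α β μ = c }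

theorem admissibleCosts_nonempty (hP₀ : 0 ∈ P) (hb : 0 ≤ b) :
    (admissibleCosts Ξ N α β P μ b).Nonempty :=
  ⟨_, Policy.noStorage m Ξ, Policy.admissible_noStorage hb hP₀, rfl⟩

theorem bddBelow_admissibleCosts [IsProbabilityMeasure μ] (hβ : ∀ i, 0 ≤ β i)
    (hαβ : ∀ i, β i ≤ α i) (hP : BddBelow P) (hb : 0 ≤ b) :
    BddBelow (admissibleCosts Ξ N α β P μ b) := by
  obtain ⟨p₀, hp₀⟩ := hP
  obtain ⟨x₀, hx₀⟩ := Ξ.bddBelow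
  exact ⟨_, by rintro _ ⟨π, hπ, rfl⟩; exact hπ.le_cost hβ hαβ hb hp₀ hx₀⟩

theorem convexOn_Jstar [IsProbabilityMeasure μ] (hβ : ∀ i, 0 ≤ β i) (hαβ : ∀ i, β i ≤ α i)
    (hP : BddBelow P) (hPconv : Convex ℝ P) (hP₀ : 0 ∈ P) :
    ConvexOn ℝ (Ici 0) (Jstar Ξ N α β P μ) := by
  refine ⟨convex_Ici 0, fun b hb b' hb' s t hs ht hst => ?_⟩
  obtain rfl : t = 1 - s := eq_sub_of_add_eq' hst
  have hbb' : (0 : Fin m → ℝ) ≤ s • b + (1 - s) • b' :=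
    add_nonneg (smul_nonneg hs hb) (smul_nonneg ht hb')
  refine Real.sInf_le_mul_sInf_add_mul_sInf (admissibleCosts_nonempty hP₀ hb)
    (bddBelow_admissibleCosts hβ hαβ hP hb) (admissibleCosts_nonempty hP₀ hb')
    (bddBelow_admissibleCosts hβ hαβ hP hb') (bddBelow_admissibleCosts hβ hαβ hP hbb') hs ht ?_
  rintro _ ⟨π, hπ, rfl⟩ _ ⟨π', hπ', rfl⟩
  exact ⟨_, ⟨_, hπ.convexComb hπ' hPconv hs (sub_nonneg.1 ht), rfl⟩,
    Policy.cost_convexComb_le hαβ π π' hs (sub_nonneg.1 ht)⟩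

theorem antitoneOn_Jstar [IsProbabilityMeasure μ] (hβ : ∀ i, 0 ≤ β i) (hαβ : ∀ i, β i ≤ α i)
    (hP : BddBelow P) (hP₀ : 0 ∈ P) : AntitoneOn (Jstar Ξ N α β P μ) (Ici 0) :=
  fun _ hb _ hb' hbb' =>
    csInf_le_csInf (bddBelow_admissibleCosts hβ hαβ hP hb') (admissibleCosts_nonempty hP₀ hb)
      fun _ ⟨π, hπ, hc⟩ => ⟨π, hπ.mono hbb', hc⟩

end OptimalCost

theorem jstar_convex_and_nonincreasing_general {m : ℕ} (N : ℕ)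
    (Ξ : Finset (Fin m → ℝ))
    (μ : Measure (ℕ → {x // x ∈ Ξ})) [IsProbabilityMeasure μ]
    (P : Set (Fin m → ℝ)) (hPcomp : IsCompact P)
    (hPconv : Convex ℝ P) (hP0 : (0 : Fin m → ℝ) ∈ P)
    (α β : Fin m → ℝ) (hβ : ∀ i, 0 ≤ β i) (hαβ : ∀ i, β i ≤ α i) :
    (∀ b b' : Fin m → ℝ, (∀ i, 0 ≤ b i) → (∀ i, 0 ≤ b' i) →
      ∀ t : ℝ, 0 ≤ t → t ≤ 1 →
        Jstar Ξ N α β P μ (t • b + (1 - t) • b')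
          ≤ t * Jstar Ξ N α β P μ b + (1 - t) * Jstar Ξ N α β P μ b') ∧
    (∀ b b' : Fin m → ℝ, (∀ i, 0 ≤ b i) → (∀ i, b i ≤ b' i) →
        Jstar Ξ N α β P μ b' ≤ Jstar Ξ N α β P μ b) := by
  have hP : BddBelow P := hPcomp.isBounded.bddBelow
  refine ⟨fun b b' hb hb' t ht₀ ht₁ => ?_, fun b b' hb hbb' =>
    antitoneOn_Jstar hβ hαβ hP hP0 hb (fun i => (hb i).trans (hbb' i)) hbb'⟩
  exact (convexOn_Jstar hβ hαβ hP hPconv hP0).2 hb hb' ht₀ (sub_nonneg.2 ht₁) (add_sub_cancel t 1)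

/-- `J*` is convex and non-increasing on `ℝ^m₊` (Theorem 1, convexity and
monotonicity part). -/
theorem jstar_convex_and_nonincreasing {m : ℕ} (N : ℕ)
    (Ξ : Finset (Fin m → ℝ))
    (μ : Measure (ℕ → {x // x ∈ Ξ})) [IsProbabilityMeasure μ]
    (P : Set (Fin m → ℝ)) (hPne : P.Nonempty) (hPcomp : IsCompact P)
    (hPconv : Convex ℝ P) (hP0 : (0 : Fin m → ℝ) ∈ P)
    (α β : Fin m → ℝ) (hβ : ∀ i, 0 ≤ β i) (hαβ : ∀ i, β i ≤ α i) :
    (∀ b b' : Fin m → ℝ, (∀ i, 0 ≤ b i) → (∀ i, 0 ≤ b' i) →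
      ∀ t : ℝ, 0 ≤ t → t ≤ 1 →
        Jstar Ξ N α β P μ (t • b + (1 - t) • b')
          ≤ t * Jstar Ξ N α β P μ b + (1 - t) * Jstar Ξ N α β P μ b') ∧
    (∀ b b' : Fin m → ℝ, (∀ i, 0 ≤ b i) → (∀ i, b i ≤ b' i) →
        Jstar Ξ N α β P μ b' ≤ Jstar Ξ N α β P μ b) :=
  jstar_convex_and_nonincreasing_general N Ξ μ P hPcomp hPconv hP0 α β hβ hαβ
end
end

section
/- For an adapted integrable real price process λ_0,…,λ_{N−1}, Σ_{k=0}^{N−2} E[( E[λ_{k+1} | F_k] − λ_k )^+] ≤ (1/2)·E[TV(λ)] + (1/2)·E[λ_{N−1} − λ_0], where TV(λ) = Σ_{k=0}^{N−2} |λ_{k+1} − λ_k|. (The upper bound (12) of Theorem 2 on the locational marginal value of storage.) -/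
open MeasureTheory

/-!
Write `D_k = E[λ_{k+1} | F_k] - λ_k`. Since `x⁺ = (x + |x|) / 2`, each summand is
`(E[D_k] + E|D_k|) / 2`. Because `λ_k` is `F_k`-measurable, `D_k = E[λ_{k+1} - λ_k | F_k]`, so
`E[D_k] = E[λ_{k+1} - λ_k]` by the tower property and `E|D_k| ≤ E|λ_{k+1} - λ_k|` by the
conditional Jensen inequality. Summing over `k`, the first terms telescope to
`E[λ_{N-1} - λ_0]` and the second ones add up to `E[TV(λ)]`.
-/

lemma max_zero_eq_half_add_half_abs (x : ℝ) : max x 0 = 1 / 2 * x + 1 / 2 * |x| := by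
  rcases le_total x 0 with h | h
  · rw [max_eq_right h, abs_of_nonpos h]; ring
  · rw [max_eq_left h, abs_of_nonneg h]; ring

section

variable {Ω : Type*} {m m0 : MeasurableSpace Ω} {μ : Measure Ω}

lemma integral_max_zero_eq {f : Ω → ℝ} (hf : Integrable f μ) :
    ∫ ω, max (f ω) 0 ∂μ = 1 / 2 * ∫ ω, f ω ∂μ + 1 / 2 * ∫ ω, |f ω| ∂μ := by
  simp_rw [max_zero_eq_half_add_half_abs]
  rw [integral_add (hf.const_mul _) (hf.abs.const_mul _), integral_const_mul,
    integral_const_mul]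

lemma condExp_sub_ae_eq_condExp_sub (hm : m ≤ m0) [SigmaFinite (μ.trim hm)]
    {X Y : Ω → ℝ} (hX : Integrable X μ) (hYm : StronglyMeasurable[m] Y)
    (hY : Integrable Y μ) :
    μ[X|m] - Y =ᵐ[μ] μ[X - Y|m] := by
  conv_lhs => rw [← condExp_of_stronglyMeasurable hm hYm hY]
  exact (condExp_sub hX hY m).symm

lemma integral_max_condExp_sub_zero_le (hm : m ≤ m0) [SigmaFinite (μ.trim hm)]
    {X Y : Ω → ℝ} (hX : Integrable X μ) (hYm : StronglyMeasurable[m] Y)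
    (hY : Integrable Y μ) :
    ∫ ω, max (μ[X|m] ω - Y ω) 0 ∂μ
      ≤ 1 / 2 * ∫ ω, |X ω - Y ω| ∂μ + 1 / 2 * ∫ ω, (X ω - Y ω) ∂μ := by
  have hD := condExp_sub_ae_eq_condExp_sub hm hX hYm hY
  have h_mean : ∫ ω, (μ[X|m] ω - Y ω) ∂μ = ∫ ω, (X ω - Y ω) ∂μ :=
    (integral_congr_ae hD).trans (integral_condExp hm)
  have h_abs : ∫ ω, |μ[X|m] ω - Y ω| ∂μ ≤ ∫ ω, |X ω - Y ω| ∂μ :=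
    (integral_congr_ae (hD.fun_comp abs)).trans_le (integral_abs_condExp_le _)
  rw [integral_max_zero_eq (f := fun ω => μ[X|m] ω - Y ω) (integrable_condExp.sub hY),
    h_mean]
  linarith

end

theorem lmv_upper_bound_general {Ω : Type*} [m0 : MeasurableSpace Ω]
    (μ : Measure Ω) [IsProbabilityMeasure μ]
    (N : ℕ) (F : Filtration ℕ m0)
    (lam : ℕ → Ω → ℝ)
    (hadapt : ∀ k, k < N → StronglyMeasurable[F k] (lam k))
    (hint : ∀ k, k < N → Integrable (lam k) μ) :
    ∑ k ∈ Finset.range (N - 1), ∫ ω, max ((μ[lam (k + 1)|F k]) ω - lam k ω) 0 ∂μ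
      ≤ (1 / 2) * ∫ ω, ∑ k ∈ Finset.range (N - 1), |lam (k + 1) ω - lam k ω| ∂μ
        + (1 / 2) * ∫ ω, (lam (N - 1) ω - lam 0 ω) ∂μ := by
  have h_incr : ∀ k ∈ Finset.range (N - 1),
      Integrable (fun ω => lam (k + 1) ω - lam k ω) μ := fun k hk => by
    rw [Finset.mem_range] at hk
    exact (hint (k + 1) (by omega)).sub (hint k (by omega))
  have h_telescope : ∀ ω, lam (N - 1) ω - lam 0 ω
      = ∑ k ∈ Finset.range (N - 1), (lam (k + 1) ω - lam k ω) := fun ω =>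
    (Finset.sum_range_sub (fun k => lam k ω) _).symm
  calc ∑ k ∈ Finset.range (N - 1), ∫ ω, max ((μ[lam (k + 1)|F k]) ω - lam k ω) 0 ∂μ
      ≤ ∑ k ∈ Finset.range (N - 1), (1 / 2 * ∫ ω, |lam (k + 1) ω - lam k ω| ∂μ
          + 1 / 2 * ∫ ω, (lam (k + 1) ω - lam k ω) ∂μ) := by
        refine Finset.sum_le_sum fun k hk => ?_
        rw [Finset.mem_range] at hk
        exact integral_max_condExp_sub_zero_le (F.le k) (hint (k + 1) (by omega))
          (hadapt k (by omega)) (hint k (by omega))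
    _ = (1 / 2) * ∫ ω, ∑ k ∈ Finset.range (N - 1), |lam (k + 1) ω - lam k ω| ∂μ
        + (1 / 2) * ∫ ω, (lam (N - 1) ω - lam 0 ω) ∂μ := by
        simp_rw [h_telescope]
        rw [integral_finsetSum _ fun k hk => (h_incr k hk).abs,
          integral_finsetSum _ h_incr, Finset.sum_add_distrib, Finset.mul_sum, Finset.mul_sum]

/-- For an adapted integrable real price process `λ_0, …, λ_{N−1}`,
`∑_{k=0}^{N−2} E[(E[λ_{k+1} | F_k] − λ_k)⁺]
  ≤ (1/2)·E[TV(λ)] + (1/2)·E[λ_{N−1} − λ_0]`,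
where `TV(λ) = ∑_{k=0}^{N−2} |λ_{k+1} − λ_k|`. -/
theorem lmv_upper_bound {Ω : Type*} [m0 : MeasurableSpace Ω]
    (μ : Measure Ω) [IsProbabilityMeasure μ]
    (N : ℕ) (hN : 1 ≤ N) (F : Filtration ℕ m0)
    (lam : ℕ → Ω → ℝ)
    (hadapt : ∀ k, k < N → StronglyMeasurable[F k] (lam k))
    (hint : ∀ k, k < N → Integrable (lam k) μ) :
    ∑ k ∈ Finset.range (N - 1), ∫ ω, max ((μ[lam (k + 1)|F k]) ω - lam k ω) 0 ∂μ
      ≤ (1 / 2) * ∫ ω, ∑ k ∈ Finset.range (N - 1), |lam (k + 1) ω - lam k ω| ∂μ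
        + (1 / 2) * ∫ ω, (lam (N - 1) ω - lam 0 ω) ∂μ :=
  lmv_upper_bound_general (m0 := m0) μ N F lam hadapt hint
end

section
/- Let N ≥ 1, b ≥ 0, and let λ_0,…,λ_{N−1} be nonnegative reals. Call a trajectory z_0,…,z_N admissible if z_0 = 0 and 0 ≤ z_k ≤ b for all k; its arbitrage revenue is Σ_{k=0}^{N−1} λ_k (z_k − z_{k+1}). Then the supremum of the arbitrage revenue over all admissible trajectories equals b · Σ_{k=0}^{N−2} (λ_{k+1} − λ_k)^+, and this supremum is attained. (Perfect-foresight arbitrage value; dual interpretation of the upper bound in Theorem 2.) -/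
/-- Abel summation for the revenue. -/
lemma abel_revenue (lam z : ℕ → ℝ) (hz0 : z 0 = 0) :
    ∀ n : ℕ, 1 ≤ n →
    ∑ k ∈ Finset.range n, lam k * (z k - z (k + 1)) =
      ∑ k ∈ Finset.range (n - 1), (lam (k + 1) - lam k) * z (k + 1)
        - lam (n - 1) * z n := by
  intro n hn
  induction n, hn using Nat.le_induction with
  | base => simp [hz0]
  | succ n hn ih =>
      obtain ⟨m, rfl⟩ := Nat.exists_eq_add_of_le' hn
      simp only [Nat.add_sub_cancel] at ih ⊢
      rw [Finset.sum_range_succ, ih, Finset.sum_range_succ]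
      ring

/-- Perfect-foresight arbitrage value of a storage device of capacity `b`.
A trajectory `z 0, …, z N` is admissible if `z 0 = 0` and `0 ≤ z k ≤ b` for all `k ≤ N`;
its revenue is `∑_{k<N} λ_k (z_k − z_{k+1})`.  The supremum of revenue over admissible
trajectories equals `b · ∑_{k<N-1} (λ_{k+1} − λ_k)⁺` and is attained. -/
theorem perfect_foresight_arbitrage_value
    (N : ℕ) (hN : 1 ≤ N) (b : ℝ) (hb : 0 ≤ b)
    (lam : ℕ → ℝ) (hlam : ∀ k, k < N → 0 ≤ lam k) :
    IsGreatest
      { r : ℝ | ∃ z : ℕ → ℝ, z 0 = 0 ∧ (∀ k, k ≤ N → 0 ≤ z k ∧ z k ≤ b) ∧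
          r = ∑ k ∈ Finset.range N, lam k * (z k - z (k + 1)) }
      (b * ∑ k ∈ Finset.range (N - 1), max (lam (k + 1) - lam k) 0) := by
  constructor
  · -- attained by the bang-bang trajectory
    set z : ℕ → ℝ := fun k =>
      if 1 ≤ k ∧ k ≤ N - 1 ∧ lam (k - 1) < lam k then b else 0 with hz
    refine ⟨z, ?_, ?_, ?_⟩
    · simp [hz]
    · intro k _
      by_cases h : 1 ≤ k ∧ k ≤ N - 1 ∧ lam (k - 1) < lam k <;>
        simp [hz, h, hb]
    · rw [abel_revenue lam z (by simp [hz]) N hN]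
      have hzN : z N = 0 := by
        have : ¬(1 ≤ N ∧ N ≤ N - 1 ∧ lam (N - 1) < lam N) := by
          rintro ⟨_, h2, _⟩; omega
        simp [hz, this]
      rw [hzN, mul_zero, sub_zero, Finset.mul_sum]
      apply Finset.sum_congr rfl
      intro k hk
      rw [Finset.mem_range] at hk
      by_cases h : lam k < lam (k + 1)
      · have hcond : 1 ≤ k + 1 ∧ k + 1 ≤ N - 1 ∧ lam (k + 1 - 1) < lam (k + 1) := by
          refine ⟨by omega, by omega, by simpa using h⟩
        have hzk : z (k + 1) = b := by simp only [hz]; exact if_pos hcond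
        rw [hzk, max_eq_left (by linarith)]
        ring
      · have hcond : ¬(1 ≤ k + 1 ∧ k + 1 ≤ N - 1 ∧ lam (k + 1 - 1) < lam (k + 1)) := by
          rintro ⟨_, _, h3⟩; exact h (by simpa using h3)
        have hzk : z (k + 1) = (0:ℝ) := by simp only [hz]; exact if_neg hcond
        rw [hzk, max_eq_right (by push_neg at h; linarith)]
        ring
  · -- upper bound
    rintro r ⟨z, hz0, hbnd, rfl⟩
    rw [abel_revenue lam z hz0 N hN]
    have h1 : ∑ k ∈ Finset.range (N - 1), (lam (k + 1) - lam k) * z (k + 1)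
        ≤ b * ∑ k ∈ Finset.range (N - 1), max (lam (k + 1) - lam k) 0 := by
      rw [Finset.mul_sum]
      apply Finset.sum_le_sum
      intro k hk
      rw [Finset.mem_range] at hk
      obtain ⟨hz1, hz2⟩ := hbnd (k + 1) (by omega)
      by_cases h : 0 ≤ lam (k + 1) - lam k
      · rw [max_eq_left h, mul_comm b]
        exact mul_le_mul_of_nonneg_left hz2 h
      · push_neg at h
        rw [max_eq_right (le_of_lt h)]
        have : (lam (k + 1) - lam k) * z (k + 1) ≤ 0 :=
          mul_nonpos_of_nonpos_of_nonneg (le_of_lt h) hz1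
        linarith
    have h2 : 0 ≤ lam (N - 1) * z N :=
      mul_nonneg (hlam (N - 1) (by omega)) (hbnd N le_rfl).1
    linarith
end

section
/- Let λ_0,…,λ_{N−1} be a nonnegative adapted integrable price process and b ≥ 0. Call a storage plan z_0,…,z_N admissible if z_0 = 0, each z_{k+1} is F_k-measurable, and 0 ≤ z_k ≤ b almost surely for all k; its expected arbitrage revenue is E[Σ_{k=0}^{N−1} λ_k (z_k − z_{k+1})]. Then the supremum of expected revenue over all admissible (causal) storage plans equals b · Σ_{k=0}^{N−2} E[( E[λ_{k+1} | F_k] − λ_k )^+], and it is attained by the threshold policy that sets z_{k+1} = b if E[λ_{k+1} | F_k] ≥ λ_k, z_{k+1} = 0 otherwise, and z_N = 0. (Causal price-arbitrage interpretation of the locational marginal value in Theorem 2.) -/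
/-!
Summation by parts turns the revenue of a plan with `z 0 = 0` into
`∑_{k<N-1} (λ_{k+1} - λ_k) z_{k+1} - λ_{N-1} z_N`. Since `z_{k+1}` is `F_k`-measurable and
bounded, the tower property replaces `λ_{k+1}` by `E[λ_{k+1} | F_k]` in expectation, so each
term is at most `b · E[(E[λ_{k+1} | F_k] - λ_k)⁺]` pointwise, while the last term is
nonpositive because prices are nonnegative. The threshold plan attains every one of these
bounds with equality.
-/

open MeasureTheory

noncomputable section

/-- The causal threshold storage plan: `z 0 = 0`, `z N = 0`, and for `k + 1 ≠ N`,
`z (k+1) = b` if `E[λ_{k+1} | F_k] ≥ λ_k` and `z (k+1) = 0` otherwise. -/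
def thresholdPlan {Ω : Type*} [m0 : MeasurableSpace Ω] (μ : Measure Ω)
    (F : Filtration ℕ m0) (lam : ℕ → Ω → ℝ) (N : ℕ) (b : ℝ) : ℕ → Ω → ℝ
  | 0, _ => 0
  | (k + 1), ω =>
      if k + 1 = N then 0
      else if lam k ω ≤ (μ[lam (k + 1)|F k]) ω then b else 0

open Finset

theorem Finset.sum_range_succ_mul_sub_succ {R : Type*} [CommRing R] (a z : ℕ → R)
    (hz : z 0 = 0) (n : ℕ) :
    ∑ k ∈ range (n + 1), a k * (z k - z (k + 1)) =
      ∑ k ∈ range n, (a (k + 1) - a k) * z (k + 1) - a n * z (n + 1) := by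
  induction n with
  | zero => simp [hz]
  | succ n ih =>
    rw [sum_range_succ, ih, sum_range_succ]
    ring

theorem sub_mul_ite_le_eq_max_zero_mul {α : Type*} [Ring α] [LinearOrder α] [IsOrderedRing α]
    (x y b : α) : (y - x) * (if x ≤ y then b else 0) = max (y - x) 0 * b := by
  split_ifs with h
  · rw [max_eq_left (sub_nonneg.mpr h)]
  · rw [max_eq_right (sub_nonpos.mpr (le_of_not_ge h)), mul_zero, zero_mul]

theorem mul_le_max_zero_mul {α : Type*} [Ring α] [LinearOrder α] [IsOrderedRing α]
    {x z b : α} (hz0 : 0 ≤ z) (hzb : z ≤ b) : x * z ≤ max x 0 * b :=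
  calc x * z ≤ max x 0 * z := mul_le_mul_of_nonneg_right (le_max_left x 0) hz0
    _ ≤ max x 0 * b := mul_le_mul_of_nonneg_left hzb (le_max_right x 0)

namespace MeasureTheory

variable {Ω : Type*} {m m0 : MeasurableSpace Ω} {μ : Measure Ω}

theorem integral_mul_eq_integral_condExp_mul (hm : m ≤ m0) [SigmaFinite (μ.trim hm)]
    {f g : Ω → ℝ} (hf : Integrable f μ) (hg : StronglyMeasurable[m] g)
    (hfg : Integrable (f * g) μ) :
    ∫ ω, f ω * g ω ∂μ = ∫ ω, (μ[f|m]) ω * g ω ∂μ :=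
  (integral_condExp hm).symm.trans
    (integral_congr_ae (condExp_mul_of_stronglyMeasurable_right hg hfg hf))

structure IsAdmissiblePlan (μ : Measure Ω) (F : Filtration ℕ m0) (N : ℕ) (b : ℝ)
    (z : ℕ → Ω → ℝ) : Prop where
  zero : ∀ ω, z 0 ω = 0
  measurable : ∀ k, k + 1 ≤ N → StronglyMeasurable[F k] (z (k + 1))
  bounds : ∀ k, k ≤ N → ∀ᵐ ω ∂μ, 0 ≤ z k ω ∧ z k ω ≤ b

def expectedRevenue (μ : Measure Ω) (lam : ℕ → Ω → ℝ) (N : ℕ) (z : ℕ → Ω → ℝ) : ℝ :=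
  ∫ ω, ∑ k ∈ range N, lam k ω * (z k ω - z (k + 1) ω) ∂μ

namespace IsAdmissiblePlan

variable {F : Filtration ℕ m0} {N : ℕ} {b : ℝ} {z : ℕ → Ω → ℝ}

theorem integrable_mul (hz : IsAdmissiblePlan μ F N b z) {k : ℕ} (hk : k + 1 ≤ N)
    {f : Ω → ℝ} (hf : Integrable f μ) : Integrable (fun ω => f ω * z (k + 1) ω) μ := by
  refine hf.mul_bdd (c := b) ((hz.measurable k hk).mono (F.le k)).aestronglyMeasurable ?_
  filter_upwards [hz.bounds (k + 1) hk] with ω hω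
  rw [Real.norm_of_nonneg hω.1]
  exact hω.2

variable [SigmaFiniteFiltration μ F] {lam : ℕ → Ω → ℝ} {n : ℕ}

theorem expectedRevenue_eq_sum_condExp (hz : IsAdmissiblePlan μ F (n + 1) b z)
    (hint : ∀ k, k < n + 1 → Integrable (lam k) μ) :
    expectedRevenue μ lam (n + 1) z =
      ∑ k ∈ range n, ∫ ω, ((μ[lam (k + 1)|F k]) ω - lam k ω) * z (k + 1) ω ∂μ
        - ∫ ω, lam n ω * z (n + 1) ω ∂μ := by
  have hterm : ∀ k ∈ range n,
      Integrable (fun ω => (lam (k + 1) ω - lam k ω) * z (k + 1) ω) μ := fun k hk =>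
    hz.integrable_mul (by grind) ((hint _ (by grind)).sub (hint k (by grind)))
  simp_rw [expectedRevenue,
    Finset.sum_range_succ_mul_sub_succ (lam · _) (z · _) (hz.zero _)]
  rw [integral_sub (integrable_finsetSum _ hterm) (hz.integrable_mul le_rfl (hint n (by omega))),
    integral_finsetSum _ hterm]
  congr 1
  refine sum_congr rfl fun k hkn => ?_
  have hk : k + 1 < n + 1 := by grind
  have hnext := hint (k + 1) hk
  have hcur := hint k (by omega)
  simp_rw [sub_mul]
  rw [integral_sub (hz.integrable_mul hk.le hnext) (hz.integrable_mul hk.le hcur),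
    integral_sub (hz.integrable_mul hk.le integrable_condExp) (hz.integrable_mul hk.le hcur),
    integral_mul_eq_integral_condExp_mul (F.le k) hnext (hz.measurable k hk.le)
      (hz.integrable_mul hk.le hnext)]

theorem expectedRevenue_le (hz : IsAdmissiblePlan μ F (n + 1) b z)
    (hint : ∀ k, k < n + 1 → Integrable (lam k) μ) (hlast : ∀ᵐ ω ∂μ, 0 ≤ lam n ω) :
    expectedRevenue μ lam (n + 1) z ≤
      b * ∑ k ∈ range n, ∫ ω, max ((μ[lam (k + 1)|F k]) ω - lam k ω) 0 ∂μ := by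
  have hlast_nonneg : 0 ≤ ∫ ω, lam n ω * z (n + 1) ω ∂μ := by
    refine integral_nonneg_of_ae ?_
    filter_upwards [hlast, hz.bounds (n + 1) le_rfl] with ω hlam hzω
    exact mul_nonneg hlam hzω.1
  have hterm : ∀ k ∈ range n,
      ∫ ω, ((μ[lam (k + 1)|F k]) ω - lam k ω) * z (k + 1) ω ∂μ ≤
        b * ∫ ω, max ((μ[lam (k + 1)|F k]) ω - lam k ω) 0 ∂μ := by
    intro k hkn
    have hk : k + 1 ≤ n + 1 := by grind
    have hgain : Integrable (fun ω => (μ[lam (k + 1)|F k]) ω - lam k ω) μ :=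
      integrable_condExp.sub (hint k (by omega))
    rw [mul_comm, ← integral_mul_const]
    refine integral_mono_ae (hz.integrable_mul hk hgain) (hgain.pos_part.mul_const b) ?_
    filter_upwards [hz.bounds (k + 1) hk] with ω hzω
    exact mul_le_max_zero_mul hzω.1 hzω.2
  rw [hz.expectedRevenue_eq_sum_condExp hint, mul_sum]
  linarith [sum_le_sum hterm]

end IsAdmissiblePlan

variable {F : Filtration ℕ m0} {lam : ℕ → Ω → ℝ} {N : ℕ} {b : ℝ}

theorem thresholdPlan_succ (k : ℕ) :
    thresholdPlan μ F lam N b (k + 1) = fun ω =>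
      if k + 1 = N then 0 else if lam k ω ≤ (μ[lam (k + 1)|F k]) ω then b else 0 :=
  rfl

theorem isAdmissiblePlan_thresholdPlan
    (hadapt : ∀ k, k < N → StronglyMeasurable[F k] (lam k)) (hb : 0 ≤ b) :
    IsAdmissiblePlan μ F N b (thresholdPlan μ F lam N b) where
  zero _ := rfl
  measurable k hk := by
    rw [thresholdPlan_succ]
    by_cases hkN : k + 1 = N
    · simp only [hkN, if_true, stronglyMeasurable_const]
    · simp only [hkN, if_false]
      exact .ite (measurableSet_le (hadapt k (by omega)).measurable
        stronglyMeasurable_condExp.measurable) stronglyMeasurable_const stronglyMeasurable_const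
  bounds k _ := ae_of_all _ fun ω => by
    cases k with
    | zero => exact ⟨le_rfl, hb⟩
    | succ k =>
      simp only [thresholdPlan_succ]
      split_ifs <;> simp [hb]

theorem expectedRevenue_thresholdPlan [SigmaFiniteFiltration μ F] {n : ℕ}
    (hadapt : ∀ k, k < n + 1 → StronglyMeasurable[F k] (lam k))
    (hint : ∀ k, k < n + 1 → Integrable (lam k) μ) (hb : 0 ≤ b) :
    expectedRevenue μ lam (n + 1) (thresholdPlan μ F lam (n + 1) b) =
      b * ∑ k ∈ range n, ∫ ω, max ((μ[lam (k + 1)|F k]) ω - lam k ω) 0 ∂μ := by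
  rw [(isAdmissiblePlan_thresholdPlan hadapt hb).expectedRevenue_eq_sum_condExp hint, mul_sum]
  simp only [thresholdPlan_succ, if_true, mul_zero, integral_zero, sub_zero]
  refine sum_congr rfl fun k hk => ?_
  have hkn : k + 1 ≠ n + 1 := by grind
  simp only [hkn, if_false, sub_mul_ite_le_eq_max_zero_mul, integral_mul_const]
  exact mul_comm _ _

end MeasureTheory

/-- Causal price-arbitrage interpretation of the locational marginal value.
For a nonnegative adapted integrable price process and capacity `b ≥ 0`, the supremum of
the expected arbitrage revenue `E[∑_{k<N} λ_k (z_k − z_{k+1})]` over all admissible causal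
storage plans (`z 0 = 0`, `z (k+1)` being `F k`-measurable, `0 ≤ z k ≤ b` a.s.) equals
`b · ∑_{k=0}^{N−2} E[(E[λ_{k+1} | F_k] − λ_k)⁺]`, and it is attained by the threshold
policy. -/
theorem causal_arbitrage_value {Ω : Type*} [m0 : MeasurableSpace Ω]
    (μ : Measure Ω) [IsProbabilityMeasure μ]
    (N : ℕ) (F : Filtration ℕ m0)
    (lam : ℕ → Ω → ℝ)
    (hadapt : ∀ k, k < N → StronglyMeasurable[F k] (lam k))
    (hint : ∀ k, k < N → Integrable (lam k) μ)
    (hpos : ∀ k, k < N → ∀ᵐ ω ∂μ, 0 ≤ lam k ω)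
    (b : ℝ) (hb : 0 ≤ b) :
    IsGreatest
      { r : ℝ | ∃ z : ℕ → Ω → ℝ,
          (∀ ω, z 0 ω = 0) ∧
          (∀ k, k + 1 ≤ N → StronglyMeasurable[F k] (z (k + 1))) ∧
          (∀ k, k ≤ N → ∀ᵐ ω ∂μ, 0 ≤ z k ω ∧ z k ω ≤ b) ∧
          r = ∫ ω, ∑ k ∈ Finset.range N, lam k ω * (z k ω - z (k + 1) ω) ∂μ }
      (b * ∑ k ∈ Finset.range (N - 1),
          ∫ ω, max ((μ[lam (k + 1)|F k]) ω - lam k ω) 0 ∂μ) ∧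
    ∫ ω, ∑ k ∈ Finset.range N, lam k ω *
          (thresholdPlan μ F lam N b k ω - thresholdPlan μ F lam N b (k + 1) ω) ∂μ
      = b * ∑ k ∈ Finset.range (N - 1),
          ∫ ω, max ((μ[lam (k + 1)|F k]) ω - lam k ω) 0 ∂μ := by
  have hT := isAdmissiblePlan_thresholdPlan (μ := μ) hadapt hb
  rcases N with _ | n
  · refine ⟨⟨⟨_, hT.zero, hT.measurable, hT.bounds, by simp⟩, ?_⟩, by simp⟩
    rintro _ ⟨z, -, -, -, rfl⟩
    simp
  · have hval := expectedRevenue_thresholdPlan hadapt hint hb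
    rw [Nat.add_sub_cancel]
    refine ⟨⟨⟨_, hT.zero, hT.measurable, hT.bounds, hval.symm⟩, ?_⟩, hval⟩
    rintro _ ⟨z, hz0, hzm, hzb, rfl⟩
    exact IsAdmissiblePlan.expectedRevenue_le ⟨hz0, hzm, hzb⟩ hint (hpos n n.lt_succ_self)
end
end

section
/- Let β ≤ α be reals and let λ_0,…,λ_{N−1} be an adapted process taking values in {α, β}. Then Σ_{k=0}^{N−2} E[( E[λ_{k+1} | F_k] − λ_k )^+] = (α − β) · Σ_{k=0}^{N−2} P(λ_k = β and λ_{k+1} = α); i.e., for a two-valued price process the causal arbitrage value equals (α − β) times the expected number of periods k for which λ_k = β and λ_{k+1} = α. (Quantitative conclusion of Proposition 1.) -/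
open MeasureTheory

/-- For an adapted process taking only the two values `α, β` (with `β ≤ α`),
`∑_{k=0}^{N−2} E[(E[λ_{k+1} | F_k] − λ_k)⁺]
  = (α − β) · ∑_{k=0}^{N−2} P(λ_k = β ∧ λ_{k+1} = α)`. -/
theorem two_valued_arbitrage_value {Ω : Type*} [m0 : MeasurableSpace Ω]
    (μ : Measure Ω) [IsProbabilityMeasure μ]
    (N : ℕ) (F : Filtration ℕ m0)
    (α β : ℝ) (hβα : β ≤ α)
    (lam : ℕ → Ω → ℝ)
    (hadapt : ∀ k, k < N → StronglyMeasurable[F k] (lam k))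
    (hval : ∀ k, k < N → ∀ ω, lam k ω = α ∨ lam k ω = β) :
    ∑ k ∈ Finset.range (N - 1), ∫ ω, max ((μ[lam (k + 1)|F k]) ω - lam k ω) 0 ∂μ
      = (α - β) * ∑ k ∈ Finset.range (N - 1),
          (μ {ω | lam k ω = β ∧ lam (k + 1) ω = α}).toReal := by
  rw [Finset.mul_sum]
  refine Finset.sum_congr rfl ?_
  intro k hk
  rw [Finset.mem_range] at hk
  have hk1 : k + 1 < N := by omega
  have hk' : k < N := by omega
  have hmle : F k ≤ m0 := F.le k
  -- measurability
  have hsm1 : StronglyMeasurable (lam (k + 1)) := (hadapt _ hk1).mono (F.le (k + 1))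
  have hsmk : StronglyMeasurable[F k] (lam k) := hadapt _ hk'
  -- integrability of lam (k+1)
  have hint : Integrable (lam (k + 1)) μ := by
    refine ⟨hsm1.aestronglyMeasurable, ?_⟩
    refine MeasureTheory.HasFiniteIntegral.of_bounded
      (C := max |α| |β|) (Filter.Eventually.of_forall fun ω => ?_)
    rcases hval _ hk1 ω with h | h <;> rw [h]
    · exact le_max_left _ _
    · exact le_max_right _ _
  -- bounds on the conditional expectation
  have hle1 : lam (k + 1) ≤ᵐ[μ] fun _ => α := by
    filter_upwards with ω
    rcases hval _ hk1 ω with h | h <;> simp [h, hβα]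
  have hle2 : (fun _ : Ω => β) ≤ᵐ[μ] lam (k + 1) := by
    filter_upwards with ω
    rcases hval _ hk1 ω with h | h <;> simp [h, hβα]
  have hub : (μ[lam (k + 1)|F k]) ≤ᵐ[μ] fun _ => α := by
    have := condExp_mono (m := F k) (μ := μ) hint (integrable_const α) hle1
    simpa [condExp_const hmle] using this
  have hlb : (fun _ : Ω => β) ≤ᵐ[μ] (μ[lam (k + 1)|F k]) := by
    have := condExp_mono (m := F k) (μ := μ) (integrable_const β) hint hle2
    simpa [condExp_const hmle] using this
  -- sets
  set A : Set Ω := {ω | lam k ω = β} with hA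
  set B : Set Ω := {ω | lam (k + 1) ω = α} with hB
  have hAF : MeasurableSet[F k] A := hsmk.measurable (measurableSet_singleton β)
  have hA0 : MeasurableSet A := hmle _ hAF
  have hB0 : MeasurableSet B := hsm1.measurable (measurableSet_singleton α)
  -- pointwise a.e. identity for the positive part
  have hmax : (fun ω => max ((μ[lam (k + 1)|F k]) ω - lam k ω) 0)
      =ᵐ[μ] A.indicator (fun ω => (μ[lam (k + 1)|F k]) ω - β) := by
    filter_upwards [hub, hlb] with ω h1 h2
    by_cases hωA : ω ∈ A
    · rw [Set.indicator_of_mem hωA]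
      have : lam k ω = β := hωA
      rw [this, max_eq_left (by linarith)]
    · rw [Set.indicator_of_notMem hωA]
      have : lam k ω = α := by
        rcases hval _ hk' ω with h | h
        · exact h
        · exact absurd h hωA
      rw [this, max_eq_right (by linarith)]
  rw [integral_congr_ae hmax, integral_indicator hA0]
  have hintc : Integrable (μ[lam (k + 1)|F k]) μ := integrable_condExp
  rw [integral_sub (hintc.restrict) (integrable_const β).restrict]
  rw [setIntegral_condExp hmle hint hAF]
  rw [← integral_sub hint.restrict (integrable_const β).restrict]
  have hpt : ∀ ω, lam (k + 1) ω - β = B.indicator (fun _ => α - β) ω := by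
    intro ω
    by_cases hωB : ω ∈ B
    · rw [Set.indicator_of_mem hωB]
      have : lam (k + 1) ω = α := hωB
      rw [this]
    · rw [Set.indicator_of_notMem hωB]
      have : lam (k + 1) ω = β := by
        rcases hval _ hk1 ω with h | h
        · exact absurd h hωB
        · exact h
      rw [this, sub_self]
  calc ∫ ω in A, (lam (k + 1) ω - β) ∂μ
      = ∫ ω in A, B.indicator (fun _ => α - β) ω ∂μ := by
        exact integral_congr_ae (Filter.Eventually.of_forall fun ω => hpt ω)
    _ = ∫ _ω in A ∩ B, (α - β) ∂μ := setIntegral_indicator hB0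
    _ = (μ (A ∩ B)).toReal • (α - β) := setIntegral_const _
    _ = (α - β) * (μ {ω | lam k ω = β ∧ lam (k + 1) ω = α}).toReal := by
        rw [smul_eq_mul, mul_comm]
        rfl
end

section
/- Let β ≤ α be reals and let λ_0,…,λ_{N−1} be an adapted process taking values in {α, β}. Then Σ_{k=0}^{N−2} E[( E[λ_{k+1} | F_k] − λ_k )^+] = (1/2)·E[TV(λ)] + (1/2)·E[λ_{N−1} − λ_0]; i.e., for a two-valued adapted price process the causal arbitrage value achieves the perfect-foresight upper bound. (Equality case of the bound (12), as asserted in Proposition 1.) -/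
open MeasureTheory

private lemma two_valued_integrable {Ω : Type*} [m0 : MeasurableSpace Ω] (μ : Measure Ω)
    [IsProbabilityMeasure μ] (α β : ℝ) (f : Ω → ℝ)
    (hm : StronglyMeasurable f) (hv : ∀ ω, f ω = α ∨ f ω = β) :
    Integrable f μ := by
  refine ⟨hm.aestronglyMeasurable, ?_⟩
  apply HasFiniteIntegral.of_bounded (C := max |α| |β|)
  filter_upwards with ω
  rcases hv ω with h | h <;> rw [Real.norm_eq_abs, h]
  · exact le_max_left _ _
  · exact le_max_right _ _

private lemma step_eq {Ω : Type*} [m0 : MeasurableSpace Ω]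
    (μ : Measure Ω) [IsProbabilityMeasure μ]
    (F : Filtration ℕ m0) (k : ℕ)
    (α β : ℝ) (hβα : β ≤ α)
    (f g : Ω → ℝ)
    (hfm : StronglyMeasurable[F k] f)
    (hgm : StronglyMeasurable g)
    (hfv : ∀ ω, f ω = α ∨ f ω = β)
    (hgv : ∀ ω, g ω = α ∨ g ω = β) :
    ∫ ω, max ((μ[g|F k]) ω - f ω) 0 ∂μ = ∫ ω, max (g ω - f ω) 0 ∂μ := by
  set S : Set Ω := f ⁻¹' {β} with hS
  have hSm : MeasurableSet[F k] S := hfm.measurable (measurableSet_singleton β)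
  have hSm0 : MeasurableSet S := F.le k _ hSm
  have hgint : Integrable g μ := two_valued_integrable μ α β g hgm hgv
  have hfint : Integrable f μ := two_valued_integrable μ α β f (hfm.mono (F.le k)) hfv
  have hgβ : (fun _ : Ω => β) ≤ᵐ[μ] g :=
    Filter.Eventually.of_forall fun ω => by rcases hgv ω with h | h <;> simp [h, hβα]
  have hgα : g ≤ᵐ[μ] fun _ : Ω => α :=
    Filter.Eventually.of_forall fun ω => by rcases hgv ω with h | h <;> simp [h, hβα]
  have hcβ : ∀ᵐ ω ∂μ, β ≤ (μ[g|F k]) ω := by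
    have h := condExp_mono (μ := μ) (m := F k) (integrable_const β) hgint hgβ
    filter_upwards [h] with ω h
    simpa [condExp_const (F.le k)] using h
  have hcα : ∀ᵐ ω ∂μ, (μ[g|F k]) ω ≤ α := by
    have h := condExp_mono (μ := μ) (m := F k) hgint (integrable_const α) hgα
    filter_upwards [h] with ω h
    simpa [condExp_const (F.le k)] using h
  have key1 : ∀ᵐ ω ∂μ, max ((μ[g|F k]) ω - f ω) 0
      = S.indicator (fun ω => (μ[g|F k]) ω - f ω) ω := by
    filter_upwards [hcβ, hcα] with ω h1 h2
    by_cases hb : f ω = β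
    · rw [Set.indicator_of_mem (by simpa [hS] using hb)]
      exact max_eq_left (by rw [hb]; linarith)
    · have ha : f ω = α := (hfv ω).resolve_right hb
      rw [Set.indicator_of_notMem (by simpa [hS] using hb)]
      exact max_eq_right (by rw [ha]; linarith)
  have key2 : ∀ ω, S.indicator (fun ω => g ω - f ω) ω = max (g ω - f ω) 0 := by
    intro ω
    by_cases hb : f ω = β
    · rw [Set.indicator_of_mem (by simpa [hS] using hb)]
      have : β ≤ g ω := by rcases hgv ω with h | h <;> rw [h]; exact hβα
      exact (max_eq_left (by rw [hb]; linarith)).symm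
    · have ha : f ω = α := (hfv ω).resolve_right hb
      rw [Set.indicator_of_notMem (by simpa [hS] using hb)]
      have : g ω ≤ α := by rcases hgv ω with h | h <;> rw [h]; exact hβα
      exact (max_eq_right (by rw [ha]; linarith)).symm
  calc ∫ ω, max ((μ[g|F k]) ω - f ω) 0 ∂μ
      = ∫ ω, S.indicator (fun ω => (μ[g|F k]) ω - f ω) ω ∂μ := integral_congr_ae key1
    _ = ∫ ω in S, ((μ[g|F k]) ω - f ω) ∂μ := integral_indicator hSm0
    _ = ∫ ω in S, (μ[g|F k]) ω ∂μ - ∫ ω in S, f ω ∂μ :=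
        integral_sub (integrable_condExp.integrableOn) (hfint.integrableOn)
    _ = ∫ ω in S, g ω ∂μ - ∫ ω in S, f ω ∂μ := by
        rw [setIntegral_condExp (F.le k) hgint hSm]
    _ = ∫ ω in S, (g ω - f ω) ∂μ :=
        (integral_sub (hgint.integrableOn) (hfint.integrableOn)).symm
    _ = ∫ ω, S.indicator (fun ω => g ω - f ω) ω ∂μ := (integral_indicator hSm0).symm
    _ = ∫ ω, max (g ω - f ω) 0 ∂μ := by simp_rw [key2]

/-- For an adapted process taking only the two values `α, β` (with `β ≤ α`),
the causal arbitrage value achieves the perfect-foresight upper bound: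
`∑_{k=0}^{N−2} E[(E[λ_{k+1} | F_k] − λ_k)⁺] = (1/2)·E[TV(λ)] + (1/2)·E[λ_{N−1} − λ_0]`. -/
theorem two_valued_achieves_upper_bound {Ω : Type*} [m0 : MeasurableSpace Ω]
    (μ : Measure Ω) [IsProbabilityMeasure μ]
    (N : ℕ) (hN : 1 ≤ N) (F : Filtration ℕ m0)
    (α β : ℝ) (hβα : β ≤ α)
    (lam : ℕ → Ω → ℝ)
    (hadapt : ∀ k, k < N → StronglyMeasurable[F k] (lam k))
    (hval : ∀ k, k < N → ∀ ω, lam k ω = α ∨ lam k ω = β) :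
    ∑ k ∈ Finset.range (N - 1), ∫ ω, max ((μ[lam (k + 1)|F k]) ω - lam k ω) 0 ∂μ
      = (1 / 2) * ∫ ω, ∑ k ∈ Finset.range (N - 1), |lam (k + 1) ω - lam k ω| ∂μ
        + (1 / 2) * ∫ ω, (lam (N - 1) ω - lam 0 ω) ∂μ := by
  have hint : ∀ k, k < N → Integrable (lam k) μ := fun k hk =>
    two_valued_integrable μ α β _ ((hadapt k hk).mono (F.le k)) (hval k hk)
  have hΔint : ∀ k ∈ Finset.range (N - 1),
      Integrable (fun ω => lam (k + 1) ω - lam k ω) μ := by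
    intro k hk; rw [Finset.mem_range] at hk
    exact (hint (k + 1) (by omega)).sub (hint k (by omega))
  have hstep : ∀ k ∈ Finset.range (N - 1),
      ∫ ω, max ((μ[lam (k + 1)|F k]) ω - lam k ω) 0 ∂μ
        = (1 / 2) * ∫ ω, |lam (k + 1) ω - lam k ω| ∂μ
          + (1 / 2) * ∫ ω, (lam (k + 1) ω - lam k ω) ∂μ := by
    intro k hk
    have hk' := Finset.mem_range.mp hk
    rw [step_eq μ F k α β hβα (lam k) (lam (k + 1))
      (hadapt k (by omega)) ((hadapt (k + 1) (by omega)).mono (F.le (k + 1)))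
      (hval k (by omega)) (hval (k + 1) (by omega))]
    have hpt : ∀ ω, max (lam (k + 1) ω - lam k ω) 0
        = (1 / 2) * |lam (k + 1) ω - lam k ω| + (1 / 2) * (lam (k + 1) ω - lam k ω) := by
      intro ω
      rcases le_total 0 (lam (k + 1) ω - lam k ω) with h | h
      · rw [max_eq_left h, abs_of_nonneg h]; ring
      · rw [max_eq_right h, abs_of_nonpos h]; ring
    simp_rw [hpt]
    rw [integral_add (((hΔint k hk).abs).const_mul _) ((hΔint k hk).const_mul _),
      integral_const_mul, integral_const_mul]
  have htel : ∫ ω, ∑ k ∈ Finset.range (N - 1), (lam (k + 1) ω - lam k ω) ∂μ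
      = ∫ ω, (lam (N - 1) ω - lam 0 ω) ∂μ :=
    integral_congr_ae (Filter.Eventually.of_forall fun ω =>
      Finset.sum_range_sub (fun i => lam i ω) (N - 1))
  rw [Finset.sum_congr rfl hstep, Finset.sum_add_distrib, ← Finset.mul_sum, ← Finset.mul_sum,
    ← integral_finset_sum _ (fun k hk => (hΔint k hk).abs),
    ← integral_finset_sum _ hΔint, htel]
end
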